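/- arXiv:2507.20825 — 2 statements merged into one kernel-verified Lean document; each statement's English description precedes it below -/
import Mathlib

section
/- Let N : ℕ with 0 < N, let c₁, c₂ : ℝ, and let π, π' be permutations of {0,…,N−1}. Let A_π = Λ_{c₂,π}·F_N·Λ_{c₁} and A_{π'} = Λ_{c₂,π'}·F_N·Λ_{c₁} be one-sided CP-DAFT matrices (identity permutation on the first chirp). Then the mismatched demodulation product satisfies A_{π'}ᴴ·A_π = I_N if and only if exp(-2πi·c₂·π'(n)²) = exp(-2πi·c₂·π(n)²) for every n ∈ {0,…,N−1}, i.e. if and only if Λ_{c₂,π'} = Λ_{c₂,π}. -/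
open Matrix Complex

/-- The permuted diagonal chirp matrix `Λ_{c,π}` with diagonal entries
`exp(-2πi·c·π(n)²)`. -/
noncomputable def permChirpMatrix (N : ℕ) (c : ℝ) (π : Equiv.Perm (Fin N)) :
    Matrix (Fin N) (Fin N) ℂ :=
  Matrix.diagonal fun n => Complex.exp (-2 * Real.pi * Complex.I * c * ((π n : ℕ)) ^ 2)

/-- The `N`-point DFT matrix `F_N` with entries `(1/√N)·exp(-2πi·m·n/N)`. -/
noncomputable def dftMatrix (N : ℕ) : Matrix (Fin N) (Fin N) ℂ :=
  fun m n => (1 / Real.sqrt N : ℂ) *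
    Complex.exp (-2 * Real.pi * Complex.I * (m : ℕ) * (n : ℕ) / N)

/-- The one-sided CP-DAFT matrix `A_π = Λ_{c₂,π} · F_N · Λ_{c₁}`
(identity permutation on the first chirp). -/
noncomputable def osCPDAFT (N : ℕ) (c₁ c₂ : ℝ) (π : Equiv.Perm (Fin N)) :
    Matrix (Fin N) (Fin N) ℂ :=
  permChirpMatrix N c₂ π * dftMatrix N * permChirpMatrix N c₁ (Equiv.refl (Fin N))

/-! The three factors of `A_π` are unitary: the chirps are diagonal with unimodular entries, and
`F_N` is `1/√N` times the Vandermonde matrix of the powers of the primitive `N`-th root of unity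
`exp(-2πi/N)`, whose columns are orthogonal because a geometric sum over an `N`-th root of unity
`≠ 1` vanishes. Hence `A_{π'}ᴴ A_π = 1` iff `A_π = A_{π'}`, and cancelling the common unitary
right factor `F_N Λ_{c₁}` leaves `Λ_{c₂,π} = Λ_{c₂,π'}`. -/

theorem Unitary.star_mul_eq_one_iff {R : Type*} [Monoid R] [StarMul R] {U V : R}
    (hU : U ∈ unitary R) : star U * V = 1 ↔ U = V := by
  refine ⟨fun h => ?_, fun h => h ▸ Unitary.star_mul_self_of_mem hU⟩
  rw [← mul_one U, ← h, ← mul_assoc, Unitary.mul_star_self_of_mem hU, one_mul]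

theorem Complex.exp_mem_unitary {z : ℂ} (hz : z.re = 0) : exp z ∈ unitary ℂ := by
  rw [Unitary.mem_iff_star_mul_self, star_def, conj_mul', norm_exp, hz, Real.exp_zero]
  norm_num

theorem Matrix.diagonal_mem_unitaryGroup {n α : Type*} [Fintype n] [DecidableEq n] [CommRing α]
    [StarRing α] {d : n → α} (hd : ∀ i, d i ∈ unitary α) : diagonal d ∈ unitaryGroup n α := by
  rw [mem_unitaryGroup_iff', star_eq_conjTranspose, diagonal_conjTranspose, diagonal_mul_diagonal,
    ← diagonal_one]
  exact congrArg diagonal (funext fun i => Unitary.star_mul_self_of_mem (hd i))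

theorem IsPrimitiveRoot.conjTranspose_vandermonde_mul_self {ζ : ℂ} {N : ℕ}
    (hζ : IsPrimitiveRoot ζ N) :
    (vandermonde fun i : Fin N => ζ ^ (i : ℕ))ᴴ * vandermonde (fun i : Fin N => ζ ^ (i : ℕ)) =
      (N : ℂ) • 1 := by
  ext m m'
  have hN : N ≠ 0 := (Fin.pos m).ne'
  set r := star (ζ ^ (m : ℕ)) * ζ ^ (m' : ℕ) with hr
  have hrN : r ^ N = 1 := by
    rw [hr, mul_pow, ← star_pow, ← pow_mul, ← pow_mul, mul_comm _ N, mul_comm _ N, pow_mul,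
      pow_mul, hζ.pow_eq_one, one_pow, one_pow, star_one, one_mul]
  have hr1 : r = 1 ↔ m = m' := by
    rw [hr, star_def, ← inv_eq_conj (by rw [norm_pow, hζ.norm'_eq_one hN, one_pow]),
      inv_mul_eq_one₀ (pow_ne_zero _ (hζ.ne_zero hN)), Fin.ext_iff]
    exact ⟨fun h => hζ.pow_inj m.isLt m'.isLt h, fun h => by rw [h]⟩
  have hterm (k : Fin N) :
      star ((ζ ^ (k : ℕ)) ^ (m : ℕ)) * (ζ ^ (k : ℕ)) ^ (m' : ℕ) = r ^ (k : ℕ) := by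
    simp only [hr, star_pow]
    ring
  simp only [mul_apply, conjTranspose_apply, vandermonde_apply, hterm, Matrix.smul_apply,
    one_apply, smul_eq_mul, mul_ite, mul_one, mul_zero]
  rw [Fin.sum_univ_eq_sum_range (fun k => r ^ k) N]
  split_ifs with h
  · simp [hr1.mpr h]
  · rw [geom_sum_eq (mt hr1.mp h), hrN, sub_self, zero_div]

theorem dftMatrix_eq_smul_vandermonde (N : ℕ) :
    dftMatrix N = (1 / Real.sqrt N : ℂ) •
      vandermonde fun i : Fin N => exp (-2 * Real.pi * I / N) ^ (i : ℕ) := by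
  ext m n
  rw [dftMatrix, Matrix.smul_apply, vandermonde_apply, smul_eq_mul, ← exp_nat_mul, ← exp_nat_mul]
  congr 2
  ring

theorem dftMatrix_mem_unitaryGroup (N : ℕ) : dftMatrix N ∈ unitaryGroup (Fin N) ℂ := by
  rcases N.eq_zero_or_pos with rfl | hN
  · exact mem_unitaryGroup_iff'.mpr (Subsingleton.elim _ _)
  have hζ : IsPrimitiveRoot (exp (-2 * Real.pi * I / N)) N := by
    simpa [neg_mul, neg_div, Complex.exp_neg] using (isPrimitiveRoot_exp N hN.ne').inv
  have hscalar : star (1 / Real.sqrt N : ℂ) * (1 / Real.sqrt N) * N = 1 := by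
    have hsq : (Real.sqrt N : ℂ) ^ 2 = N := by
      rw [← ofReal_pow, Real.sq_sqrt N.cast_nonneg, ofReal_natCast]
    have hsqrt : (Real.sqrt N : ℂ) ≠ 0 := by simp [hN.ne']
    rw [star_def, map_div₀, map_one, conj_ofReal, ← hsq]
    field_simp
  rw [mem_unitaryGroup_iff', star_eq_conjTranspose, dftMatrix_eq_smul_vandermonde,
    conjTranspose_smul, Matrix.smul_mul, Matrix.mul_smul, hζ.conjTranspose_vandermonde_mul_self,
    smul_smul, smul_smul, hscalar, one_smul]

theorem permChirpMatrix_mem_unitaryGroup (N : ℕ) (c : ℝ) (π : Equiv.Perm (Fin N)) :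
    permChirpMatrix N c π ∈ unitaryGroup (Fin N) ℂ :=
  diagonal_mem_unitaryGroup fun n => exp_mem_unitary (by simp [sq])

theorem osCPDAFT_mem_unitaryGroup (N : ℕ) (c₁ c₂ : ℝ) (π : Equiv.Perm (Fin N)) :
    osCPDAFT N c₁ c₂ π ∈ unitaryGroup (Fin N) ℂ :=
  mul_mem (mul_mem (permChirpMatrix_mem_unitaryGroup N c₂ π) (dftMatrix_mem_unitaryGroup N))
    (permChirpMatrix_mem_unitaryGroup N c₁ _)

theorem conjTranspose_osCPDAFT_mul_eq_one_iff (N : ℕ) (c₁ c₂ : ℝ) (π π' : Equiv.Perm (Fin N)) :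
    (osCPDAFT N c₁ c₂ π')ᴴ * osCPDAFT N c₁ c₂ π = 1 ↔
      permChirpMatrix N c₂ π' = permChirpMatrix N c₂ π := by
  let B : unitaryGroup (Fin N) ℂ :=
    ⟨dftMatrix N * permChirpMatrix N c₁ (Equiv.refl (Fin N)),
      mul_mem (dftMatrix_mem_unitaryGroup N) (permChirpMatrix_mem_unitaryGroup N c₁ _)⟩
  rw [← star_eq_conjTranspose, Unitary.star_mul_eq_one_iff (osCPDAFT_mem_unitaryGroup N c₁ c₂ π'),
    osCPDAFT, osCPDAFT, mul_assoc, mul_assoc]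
  exact Unitary.mul_left_inj B

theorem osCPDAFT_mismatch_general (N : ℕ) (c₁ c₂ : ℝ)
    (π π' : Equiv.Perm (Fin N)) :
    ((osCPDAFT N c₁ c₂ π')ᴴ * osCPDAFT N c₁ c₂ π = 1 ↔
      ∀ n : Fin N,
        Complex.exp (-2 * Real.pi * Complex.I * c₂ * ((π' n : ℕ) : ℂ) ^ 2) =
          Complex.exp (-2 * Real.pi * Complex.I * c₂ * ((π n : ℕ) : ℂ) ^ 2)) ∧
    ((osCPDAFT N c₁ c₂ π')ᴴ * osCPDAFT N c₁ c₂ π = 1 ↔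
      permChirpMatrix N c₂ π' = permChirpMatrix N c₂ π) := by
  have hmatch := conjTranspose_osCPDAFT_mul_eq_one_iff N c₁ c₂ π π'
  exact ⟨hmatch.trans diagonal_eq_diagonal_iff, hmatch⟩

/-- **Mismatched demodulation**: `A_{π'}ᴴ·A_π = I_N` iff the permuted chirp phase
sequences coincide, i.e. iff `Λ_{c₂,π'} = Λ_{c₂,π}`. -/
theorem osCPDAFT_mismatch (N : ℕ) (hN : 0 < N) (c₁ c₂ : ℝ)
    (π π' : Equiv.Perm (Fin N)) :
    ((osCPDAFT N c₁ c₂ π')ᴴ * osCPDAFT N c₁ c₂ π = 1 ↔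
      ∀ n : Fin N,
        Complex.exp (-2 * Real.pi * Complex.I * c₂ * ((π' n : ℕ) : ℂ) ^ 2) =
          Complex.exp (-2 * Real.pi * Complex.I * c₂ * ((π n : ℕ) : ℂ) ^ 2)) ∧
    ((osCPDAFT N c₁ c₂ π')ᴴ * osCPDAFT N c₁ c₂ π = 1 ↔
      permChirpMatrix N c₂ π' = permChirpMatrix N c₂ π) :=
  osCPDAFT_mismatch_general N c₁ c₂ π π'
end

section
/- Let N, α, ℓmax, fmax : ℕ with fmax ≤ α and (2·α + 1)·(ℓmax + 1) ≤ N (the AFDM orthogonality condition with chirp parameter c₁ = (2α+1)/(2N), so that 2Nc₁ = 2α+1). Then the location-index map (ℓ, f) ↦ (f + ℓ·(2·α + 1)) mod N is injective on the set of integer pairs {0,…,ℓmax} × {−fmax,…,fmax}; i.e., distinct integer delay-Doppler pairs within the unambiguous range are mapped to distinct residues modulo N. -/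
/-! Distinct pairs `(ℓ, f)` give values `f + ℓ·(2α+1)` that differ by less than `(2α+1)(ℓmax+1) ≤ N`,
so congruence modulo `N` forces equality; and an integer has at most one balanced base-`(2α+1)`
expansion `f + ℓ·(2α+1)` with `|f| ≤ α`, because two last digits are congruent mod `2α+1` yet
differ by at most `2α`. -/

theorem Int.ModEq.eq_of_abs_sub_lt {n a b : ℤ} (h : a ≡ b [ZMOD n]) (hab : |b - a| < n) :
    a = b :=
  (sub_eq_zero.mp (Int.eq_zero_of_abs_lt_dvd h.dvd hab)).symm

theorem Int.eq_and_eq_of_add_mul_eq_add_mul {α ℓ ℓ' f f' : ℤ} (hf : |f| ≤ α) (hf' : |f'| ≤ α)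
    (h : f + ℓ * (2 * α + 1) = f' + ℓ' * (2 * α + 1)) : ℓ = ℓ' ∧ f = f' := by
  have hdvd : 2 * α + 1 ∣ f' - f := ⟨ℓ - ℓ', by linear_combination -h⟩
  have hclose : |f' - f| < 2 * α + 1 := by
    rw [abs_le] at hf hf'
    rw [abs_lt]
    constructor <;> linarith
  have hff' : f = f' := (sub_eq_zero.mp (Int.eq_zero_of_abs_lt_dvd hdvd hclose)).symm
  subst hff'
  have hpos : 2 * α + 1 ≠ 0 := by linarith [abs_nonneg f]
  exact ⟨mul_right_cancel₀ hpos (add_left_cancel h), rfl⟩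

theorem Int.abs_add_mul_sub_add_mul_lt {α L ℓ ℓ' f f' : ℤ} (hf : |f| ≤ α) (hf' : |f'| ≤ α)
    (hℓ : 0 ≤ ℓ) (hℓL : ℓ ≤ L) (hℓ' : 0 ≤ ℓ') (hℓ'L : ℓ' ≤ L) :
    |(f' + ℓ' * (2 * α + 1)) - (f + ℓ * (2 * α + 1))| < (2 * α + 1) * (L + 1) := by
  rw [abs_le] at hf hf'
  have hα : 0 ≤ α := by linarith
  rw [abs_lt]
  constructor <;> nlinarith

/-- **Injectivity of the AFDM location-index map**: under the orthogonality condition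
`(2α+1)·(ℓmax+1) ≤ N` with `fmax ≤ α`, the map `(ℓ, f) ↦ (f + ℓ·(2α+1)) mod N` is
injective on `{0,…,ℓmax} × {−fmax,…,fmax}`. -/
theorem afdm_location_index_injective (N α ℓmax fmax : ℕ)
    (hf : fmax ≤ α) (hN : (2 * α + 1) * (ℓmax + 1) ≤ N) :
    ∀ ℓ ℓ' f f' : ℤ,
      0 ≤ ℓ → ℓ ≤ ℓmax → 0 ≤ ℓ' → ℓ' ≤ ℓmax →
      -(fmax : ℤ) ≤ f → f ≤ fmax → -(fmax : ℤ) ≤ f' → f' ≤ fmax →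
      (f + ℓ * (2 * α + 1)) % (N : ℤ) = (f' + ℓ' * (2 * α + 1)) % (N : ℤ) →
      ℓ = ℓ' ∧ f = f' := by
  intro ℓ ℓ' f f' hℓ hℓmax hℓ' hℓ'max hf_lo hf_hi hf'_lo hf'_hi hmod
  have habs : |f| ≤ α := abs_le.mpr ⟨by omega, by omega⟩
  have habs' : |f'| ≤ α := abs_le.mpr ⟨by omega, by omega⟩
  have hclose := Int.abs_add_mul_sub_add_mul_lt habs habs' hℓ hℓmax hℓ' hℓ'max
  have hNZ : ((2 * α + 1) * (ℓmax + 1) : ℤ) ≤ N := by exact_mod_cast hN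
  exact Int.eq_and_eq_of_add_mul_eq_add_mul habs habs'
    (Int.ModEq.eq_of_abs_sub_lt hmod (hclose.trans_le hNZ))
end
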